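/- arXiv:2512.06436 — 6 statements merged into one kernel-verified Lean document; each statement's English description precedes it below -/
import Mathlib

section
/- Let A be a finite-dimensional Gorenstein local ℂ-algebra with maximal ideal m of nilpotency index r and socle generator s. Let ξ be a derivation of A with ξ(s) = 0. Then m^{r-1}·ξ(m) = 0 for every m ∈ m. -/
/-!
For `m` in the maximal ideal, `m ^ r` is annihilated by the maximal ideal (as `𝔪 ^ (r + 1) = 0`),
so it lies in the socle `ℂ ∙ s` and hence `ξ (m ^ r) = 0`. By the Leibniz rule
`ξ (m ^ r) = r • m ^ (r - 1) * ξ m`, and `r` is invertible in characteristic zero.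
-/

theorem Ideal.pow_mul_eq_zero_of_pow_succ_eq_bot {R : Type*} [CommSemiring R] {I : Ideal R}
    {n : ℕ} (hI : I ^ (n + 1) = ⊥) {a x : R} (ha : a ∈ I) (hx : x ∈ I) : a ^ n * x = 0 := by
  have : a ^ n * x ∈ I ^ (n + 1) := pow_succ I n ▸ Ideal.mul_mem_mul (Ideal.pow_mem_pow ha n) hx
  simpa [hI] using this

theorem Derivation.pow_mul_apply_eq_zero_of_apply_pow_succ_eq_zero {K A : Type*} [Field K]
    [CharZero K] [CommRing A] [Algebra K A] (D : Derivation K A A) {a : A} {n : ℕ}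
    (h : D (a ^ (n + 1)) = 0) : a ^ n * D a = 0 := by
  rw [D.leibniz_pow, Nat.add_sub_cancel, smul_eq_mul, ← Nat.cast_smul_eq_nsmul K] at h
  exact (smul_eq_zero.mp h).resolve_left (Nat.cast_ne_zero.mpr n.succ_ne_zero)

theorem derivation_kills_top_power_general
    (A : Type) [CommRing A] [Algebra ℂ A] [IsLocalRing A]
    (r : ℕ)
    (hr' : IsLocalRing.maximalIdeal A ^ (r + 1) = ⊥)
    (s : A)
    (hsoc : ∀ a : A,
      (a ∈ IsLocalRing.maximalIdeal A ∧ ∀ x ∈ IsLocalRing.maximalIdeal A, a * x = 0) ↔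
        a ∈ Submodule.span ℂ {s})
    (ξ : Derivation ℂ A A) (hξ : ξ s = 0) :
    ∀ m ∈ IsLocalRing.maximalIdeal A, m ^ (r - 1) * ξ m = 0 := by
  intro m hm
  rcases r with _ | r
  · obtain rfl : m = 0 := by simpa using Ideal.pow_mul_eq_zero_of_pow_succ_eq_bot hr' hm hm
    simp
  have hm_socle : m ^ (r + 1) ∈ Submodule.span ℂ {s} :=
    (hsoc _).mp ⟨Ideal.pow_mem_of_mem _ hm _ r.succ_pos,
      fun _ hx => Ideal.pow_mul_eq_zero_of_pow_succ_eq_bot hr' hm hx⟩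
  obtain ⟨c, hc⟩ := Submodule.mem_span_singleton.mp hm_socle
  rw [Nat.add_sub_cancel]
  exact ξ.pow_mul_apply_eq_zero_of_apply_pow_succ_eq_zero (by rw [← hc, ξ.map_smul, hξ, smul_zero])

/-- If `ξ` is a derivation of a finite-dimensional Gorenstein local ℂ-algebra
killing a socle generator `s`, then `m^(r-1) · ξ(m) = 0` for all `m` in the
maximal ideal, where `r` is the nilpotency index. -/
theorem derivation_kills_top_power
    (A : Type) [CommRing A] [Algebra ℂ A] [FiniteDimensional ℂ A] [IsLocalRing A]
    (r : ℕ) (hr : IsLocalRing.maximalIdeal A ^ r ≠ ⊥)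
    (hr' : IsLocalRing.maximalIdeal A ^ (r + 1) = ⊥)
    (s : A) (hs : s ≠ 0)
    (hsoc : ∀ a : A,
      (a ∈ IsLocalRing.maximalIdeal A ∧ ∀ x ∈ IsLocalRing.maximalIdeal A, a * x = 0) ↔
        a ∈ Submodule.span ℂ {s})
    (ξ : Derivation ℂ A A) (hξ : ξ s = 0) :
    ∀ m ∈ IsLocalRing.maximalIdeal A, m ^ (r - 1) * ξ m = 0 :=
  derivation_kills_top_power_general A r hr' s hsoc ξ hξ
end

section
/- Let A be a finite-dimensional Gorenstein local ℂ-algebra with maximal ideal m of nilpotency index r, socle generator s, and index polynomial P_A on V = m/m². Let ξ be a derivation of A acting trivially on Soc(A), and let ρ(ξ) denote the induced linear map on V. Then for every v ∈ V, the directional derivative of P_A at v in the direction ρ(ξ)v vanishes: dP_A(v)(ρ(ξ)v) = 0. -/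
/-!
Pick a functional `λ` with `λ s = 1`, so that `P m = λ (m ^ r)` on the maximal ideal. In
characteristic zero a derivation preserves nilpotents, so `v + t • ξ v` stays in the maximal ideal
and `t ↦ P (v + t • ξ v) = λ ((v + t • ξ v) ^ r)` is a polynomial in `t`. Its derivative at `0` is
`λ (r • v ^ (r - 1) * ξ v) = λ (ξ (v ^ r)) = λ (P v • ξ s) = 0`.
-/

namespace Derivation

variable {R A : Type*} [CommSemiring R] [CommRing A] [Algebra R A] (D : Derivation R A A)

theorem leibniz_pow_mul_self (a : A) (n : ℕ) : D (a ^ n) * a = n • (a ^ n * D a) := by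
  cases n with
  | zero => simp
  | succ n => simp only [leibniz_pow, smul_eq_mul, nsmul_eq_mul, Nat.add_sub_cancel]; ring

variable [IsAddTorsionFree A]

/-- Differentiating `x ^ (k + 1) * (D x) ^ (2 * i) = 0` and multiplying by `D x` trades one
factor `x` for two factors `D x`. -/
theorem pow_mul_pow_two_mul_succ_eq_zero {x : A} {k i : ℕ}
    (h : x ^ (k + 1) * D x ^ (2 * i) = 0) : x ^ k * D x ^ (2 * (i + 1)) = 0 := by
  have hD : D (x ^ (k + 1) * D x ^ (2 * i)) * D x = 0 := by rw [h, map_zero, zero_mul]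
  have hDpow : x ^ (k + 1) * (D (D x ^ (2 * i)) * D x) = 0 := by
    rw [leibniz_pow_mul_self, mul_smul_comm, ← mul_assoc, h, zero_mul, nsmul_zero]
  have hsmul : (k + 1) • (x ^ k * D x ^ (2 * (i + 1))) = 0 := by
    rw [← hD, leibniz, D.leibniz_pow x, Nat.add_sub_cancel]
    simp only [smul_eq_mul, nsmul_eq_mul, Nat.cast_add, Nat.cast_one]
    linear_combination -hDpow
  exact (nsmul_right_injective k.succ_ne_zero) (hsmul.trans (nsmul_zero _).symm)

theorem pow_mul_pow_two_mul_eq_zero {x : A} (k i : ℕ) (h : x ^ (k + i) = 0) :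
    x ^ k * D x ^ (2 * i) = 0 := by
  induction i generalizing k with
  | zero => simpa using h
  | succ i ih => exact D.pow_mul_pow_two_mul_succ_eq_zero (ih (k + 1) (by rwa [add_right_comm]))

theorem isNilpotent_apply {x : A} (hx : IsNilpotent x) : IsNilpotent (D x) := by
  obtain ⟨n, hn⟩ := hx
  exact ⟨2 * n, by simpa using D.pow_mul_pow_two_mul_eq_zero 0 n (by simpa using hn)⟩

end Derivation

theorem LinearMap.hasDerivAt_add_smul_pow {𝕜 A F : Type*} [NontriviallyNormedField 𝕜]
    [CommRing A] [Algebra 𝕜 A] [NormedAddCommGroup F] [NormedSpace 𝕜 F]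
    (f : A →ₗ[𝕜] F) (v w : A) (n : ℕ) :
    HasDerivAt (fun t : 𝕜 => f ((v + t • w) ^ n)) (f (n • (v ^ (n - 1) * w))) 0 := by
  induction n generalizing f with
  | zero => simpa using hasDerivAt_const (0 : 𝕜) (f 1)
  | succ n ih =>
    have hsplit : (fun t : 𝕜 => f ((v + t • w) ^ (n + 1))) = fun t =>
        (f ∘ₗ mulLeft 𝕜 v) ((v + t • w) ^ n) +
          t • (f ∘ₗ mulLeft 𝕜 w) ((v + t • w) ^ n) := by
      ext t
      simp [pow_succ', add_mul]
    rw [hsplit]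
    refine ((ih _).fun_add ((hasDerivAt_id' 0).fun_smul (ih _))).congr_deriv ?_
    simp only [comp_apply, mulLeft_apply, zero_smul, one_smul, zero_add,
      ← map_add]
    congr 1
    cases n with
    | zero => simp
    | succ n => simp only [Nat.add_sub_cancel, succ_nsmul, pow_succ']; ring

theorem index_polynomial_directional_derivative_vanishes_general
    (A : Type) [CommRing A] [Algebra ℂ A] [IsLocalRing A]
    (r : ℕ) (hr' : IsLocalRing.maximalIdeal A ^ (r + 1) = ⊥)
    (s : A) (hs : s ≠ 0)
    (P : A → ℂ) (hP : ∀ m ∈ IsLocalRing.maximalIdeal A, m ^ r = P m • s)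
    (ξ : Derivation ℂ A A) (hξ : ξ s = 0) :
    ∀ v ∈ IsLocalRing.maximalIdeal A,
      HasDerivAt (fun t : ℂ => P (v + t • ξ v)) 0 0 := by
  intro v hv
  have : IsAddTorsionFree A := .of_isTorsionFree ℂ A
  have hv_nil : IsNilpotent v := ⟨r + 1, by simpa [hr'] using Ideal.pow_mem_pow hv (r + 1)⟩
  have hξv : ξ v ∈ IsLocalRing.maximalIdeal A :=
    (IsLocalRing.mem_maximalIdeal _).mpr (ξ.isNilpotent_apply hv_nil).not_isUnit
  obtain ⟨l, hl⟩ := Module.Projective.exists_dual_eq_one ℂ hs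
  have hP_eq : (fun t : ℂ => P (v + t • ξ v)) = fun t => l ((v + t • ξ v) ^ r) := by
    ext t
    have hmem : v + t • ξ v ∈ IsLocalRing.maximalIdeal A :=
      add_mem hv (Submodule.smul_of_tower_mem _ t hξv)
    rw [hP _ hmem, map_smul, hl, smul_eq_mul, mul_one]
  have hlinear_term : r • (v ^ (r - 1) * ξ v) = 0 := by
    rw [← smul_eq_mul, ← ξ.leibniz_pow, hP v hv, ξ.map_smul, hξ, smul_zero]
  simpa [hP_eq, hlinear_term] using l.hasDerivAt_add_smul_pow v (ξ v) r

/-- Let `A` be a finite-dimensional Gorenstein local ℂ-algebra with index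
polynomial `P` and let `ξ` be a derivation acting trivially on the socle. Then
for every `v` in the maximal ideal, the directional derivative of `P` at `v` in
the direction `ξ v` (representing `ρ(ξ)v` in `V = m/m²`) vanishes: the function
`t ↦ P(v + t·ξ v)` has derivative `0` at `t = 0`. -/
theorem index_polynomial_directional_derivative_vanishes
    (A : Type) [CommRing A] [Algebra ℂ A] [FiniteDimensional ℂ A] [IsLocalRing A]
    (r : ℕ) (hr : IsLocalRing.maximalIdeal A ^ r ≠ ⊥)
    (hr' : IsLocalRing.maximalIdeal A ^ (r + 1) = ⊥)
    (s : A) (hs : s ≠ 0)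
    (hsoc : ∀ a : A,
      (a ∈ IsLocalRing.maximalIdeal A ∧ ∀ x ∈ IsLocalRing.maximalIdeal A, a * x = 0) ↔
        a ∈ Submodule.span ℂ {s})
    (P : A → ℂ) (hP : ∀ m ∈ IsLocalRing.maximalIdeal A, m ^ r = P m • s)
    (ξ : Derivation ℂ A A) (hξ : ξ s = 0) :
    ∀ v ∈ IsLocalRing.maximalIdeal A,
      HasDerivAt (fun t : ℂ => P (v + t • ξ v)) 0 0 :=
  index_polynomial_directional_derivative_vanishes_general A r hr' s hs P hP ξ hξ
end

section
/- Let A be a finite-dimensional Gorenstein local ℂ-algebra with index polynomial P_A (homogeneous of degree r) on V = m/m². Let ξ be a derivation of A killing the socle, and let v ∈ V be an eigenvector of the induced map ρ(ξ) on V with eigenvalue λ. If P_A(v) ≠ 0, then λ = 0. -/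
/-! Applying `ξ` to `v ^ r = P(v) • s` gives `0`, since `ξ s = 0`. On the other hand `v` is an
eigenvector of `ξ` modulo `m²` and `v ^ (r - 1) m² ⊆ m ^ (r + 1) = 0`, so the Leibniz rule gives
`ξ (v ^ r) = r λ v ^ r = r λ P(v) • s` (Euler's identity `dP(v)(ρ(ξ)v) = λ r P(v)`). Here `r ≠ 0`,
as otherwise `m = 0` would contain no `v ∉ m²`. -/

theorem Derivation.map_pow_eq_smul_pow_of_sub_smul_mem_sq {R A : Type*} [CommRing R] [CommRing A]
    [Algebra R A] (D : Derivation R A A) {I : Ideal A} {r : ℕ} (hI : I ^ (r + 1) = ⊥) {v : A}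
    (hv : v ∈ I) {lam : R} (heig : D v - lam • v ∈ I ^ 2) :
    D (v ^ r) = ((r : R) * lam) • v ^ r := by
  cases r with
  | zero => simp
  | succ n =>
    have hker : v ^ n * (D v - lam • v) = 0 := by
      have hmem := Submodule.mul_mem_mul (Ideal.pow_mem_pow hv n) heig
      rwa [← pow_add, hI, Ideal.mem_bot] at hmem
    rw [mul_sub, sub_eq_zero] at hker
    rw [Derivation.leibniz_pow, Nat.add_sub_cancel, smul_eq_mul, hker, mul_smul_comm, ← pow_succ,
      mul_smul, Nat.cast_smul_eq_nsmul]

theorem eigenvalue_zero_of_index_polynomial_ne_zero_general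
    (A : Type) [CommRing A] [Algebra ℂ A] [IsLocalRing A]
    (r : ℕ)
    (hr' : IsLocalRing.maximalIdeal A ^ (r + 1) = ⊥)
    (s : A) (hs : s ≠ 0)
    (P : A → ℂ) (hP : ∀ m ∈ IsLocalRing.maximalIdeal A, m ^ r = P m • s)
    (ξ : Derivation ℂ A A) (hξ : ξ s = 0)
    (lam : ℂ) (v : A) (hv : v ∈ IsLocalRing.maximalIdeal A)
    (hv0 : v ∉ IsLocalRing.maximalIdeal A ^ 2)
    (heig : ξ v - lam • v ∈ IsLocalRing.maximalIdeal A ^ 2)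
    (hPv : P v ≠ 0) :
    lam = 0 := by
  have hr : r ≠ 0 := by
    rintro rfl
    rw [zero_add, pow_one] at hr'
    exact hv0 (by simp [(Submodule.eq_bot_iff _).mp hr' v hv])
  have euler := ξ.map_pow_eq_smul_pow_of_sub_smul_mem_sq hr' hv heig
  rw [hP v hv, ξ.map_smul, hξ, smul_zero, smul_smul, eq_comm, smul_eq_zero] at euler
  simpa [hr, hPv, hs] using euler

/-- Let `A` be a finite-dimensional Gorenstein local ℂ-algebra with index
polynomial `P` (homogeneous of degree `r`), `ξ` a derivation killing the socle,
and `v` an eigenvector (mod `m²`) of the induced map on `V = m/m²` with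
eigenvalue `λ`. If `P(v) ≠ 0` then `λ = 0`. -/
theorem eigenvalue_zero_of_index_polynomial_ne_zero
    (A : Type) [CommRing A] [Algebra ℂ A] [FiniteDimensional ℂ A] [IsLocalRing A]
    (r : ℕ) (hr : IsLocalRing.maximalIdeal A ^ r ≠ ⊥)
    (hr' : IsLocalRing.maximalIdeal A ^ (r + 1) = ⊥)
    (s : A) (hs : s ≠ 0)
    (hsoc : ∀ a : A,
      (a ∈ IsLocalRing.maximalIdeal A ∧ ∀ x ∈ IsLocalRing.maximalIdeal A, a * x = 0) ↔
        a ∈ Submodule.span ℂ {s})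
    (P : A → ℂ) (hP : ∀ m ∈ IsLocalRing.maximalIdeal A, m ^ r = P m • s)
    (hhom : ∀ (lam : ℂ), ∀ m ∈ IsLocalRing.maximalIdeal A, P (lam • m) = lam ^ r * P m)
    (ξ : Derivation ℂ A A) (hξ : ξ s = 0)
    (lam : ℂ) (v : A) (hv : v ∈ IsLocalRing.maximalIdeal A)
    (hv0 : v ∉ IsLocalRing.maximalIdeal A ^ 2)
    (heig : ξ v - lam • v ∈ IsLocalRing.maximalIdeal A ^ 2)
    (hPv : P v ≠ 0) :
    lam = 0 :=
  eigenvalue_zero_of_index_polynomial_ne_zero_general A r hr' s hs P hP ξ hξ lam v hv hv0 heig hPv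
end

section
/- Let A be a finite-dimensional Gorenstein local ℂ-algebra of full null-index with maximal ideal m of nilpotency index r. Let k be a Lie subalgebra of Der(A) acting trivially on Soc(A). Then for every ξ ∈ k, the induced linear transformation ρ(ξ) on V = m/m² is nilpotent. -/
/-!
A derivation `ξ` over a field of characteristic zero cannot send a nilpotent element to a unit,
so it preserves `m` and `m²` and induces `ρ(ξ)` on `m/m²`. If `μ` is an eigenvalue of `ρ(ξ)`,
full null-index gives an eigenvector `v` with `v ^ r = P(v) • s ≠ 0`. As `m ^ (r + 1) = 0`,
Leibniz gives `ξ (v ^ r) = (r * μ) • v ^ r`, while `ξ (v ^ r) = P(v) • ξ s = 0`; hence `μ = 0`.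
An endomorphism of a finite-dimensional complex space whose only eigenvalue is `0` is nilpotent.
-/

open IsLocalRing Polynomial

theorem Module.End.isNilpotent_of_forall_hasEigenvalue_eq_zero {K V : Type*} [Field K]
    [IsAlgClosed K] [AddCommGroup V] [Module K V] [FiniteDimensional K V] (f : Module.End K V)
    (h : ∀ μ, f.HasEigenvalue μ → μ = 0) : IsNilpotent f := by
  set p := minpoly K f
  have hroots : p.roots = Multiset.replicate p.roots.card 0 :=
    Multiset.eq_replicate_card.mpr fun μ hμ =>
      h μ (hasEigenvalue_iff_isRoot.mpr (isRoot_of_mem_roots hμ))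
  have hp : p = X ^ p.roots.card := by
    conv_lhs => rw [(IsAlgClosed.splits p).eq_prod_roots_of_monic
      (minpoly.monic (Algebra.IsIntegral.isIntegral f)), hroots]
    simp
  have hfp : aeval f p = 0 := minpoly.aeval K f
  rw [hp, map_pow, aeval_X] at hfp
  exact ⟨_, hfp⟩

theorem Derivation.map_mem_maximalIdeal_of_isNilpotent {K A : Type*} [Field K] [CharZero K]
    [CommRing A] [IsLocalRing A] [Algebra K A] (D : Derivation K A A) {x : A}
    (hx : IsNilpotent x) : D x ∈ maximalIdeal A := by
  intro hDx
  set n := nilpotencyClass x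
  have hnA : IsUnit (n : A) := by
    simpa using (IsUnit.mk0 (n : K) (Nat.cast_ne_zero.mpr
      (pos_nilpotencyClass_iff.mpr hx).ne')).map (algebraMap K A)
  have hDxn := D.leibniz_pow x n
  rw [pow_nilpotencyClass hx, map_zero, nsmul_eq_mul, smul_eq_mul, eq_comm,
    hnA.mul_right_eq_zero, hDx.mul_left_eq_zero] at hDxn
  exact pow_pred_nilpotencyClass hx hDxn

instance Ideal.finiteDimensional_cotangent {K A : Type*} [Field K] [CommRing A] [Algebra K A]
    [FiniteDimensional K A] (I : Ideal A) : FiniteDimensional K I.Cotangent :=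
  Module.Finite.of_surjective (I.toCotangent.restrictScalars K) I.toCotangent_surjective

namespace Derivation

variable {R A : Type*} [CommRing R] [CommRing A] [Algebra R A] (D : Derivation R A A)
  {I : Ideal A}

theorem mapsTo_pow_two (hD : Set.MapsTo D I I) : Set.MapsTo D ↑(I ^ 2) ↑(I ^ 2) := by
  intro x hx
  rw [SetLike.mem_coe, pow_two] at hx ⊢
  induction hx using Submodule.mul_induction_on' with
  | mem_mul_mem a ha b hb =>
    rw [D.leibniz]
    exact add_mem (Ideal.mul_mem_mul ha (hD hb)) (Ideal.mul_mem_mul hb (hD ha))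
  | add x _ y _ hx hy => rw [map_add]; exact add_mem hx hy

def restrictIdeal (hD : Set.MapsTo D I I) : I →ₗ[R] I where
  toFun x := ⟨D x, hD x.2⟩
  map_add' x y := Subtype.ext (D.map_add x y)
  map_smul' c x := Subtype.ext (D.map_smul c x)

theorem restrictScalars_smul_top_le_comap_restrictIdeal (hD : Set.MapsTo D I I) :
    (I • ⊤ : Submodule A I).restrictScalars R ≤
      ((I • ⊤ : Submodule A I).restrictScalars R).comap (D.restrictIdeal hD) := by
  intro x hx
  rw [Submodule.restrictScalars_mem, ← Submodule.Quotient.mk_eq_zero] at hx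
  rw [Submodule.mem_comap, Submodule.restrictScalars_mem, ← Submodule.Quotient.mk_eq_zero]
  exact (I.toCotangent_eq_zero _).mpr (D.mapsTo_pow_two hD ((I.toCotangent_eq_zero x).mp hx))

/-- The map `ρ(D)` on `I / I²`. The quotient is taken by the `R`-submodule underlying `I • ⊤`,
since `D` is only `R`-linear. -/
def cotangentMap (hD : Set.MapsTo D I I) : Module.End R I.Cotangent :=
  (Submodule.Quotient.restrictScalarsEquiv R _).toLinearMap ∘ₗ
    Submodule.mapQ _ _ (D.restrictIdeal hD)
      (D.restrictScalars_smul_top_le_comap_restrictIdeal hD) ∘ₗ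
    (Submodule.Quotient.restrictScalarsEquiv R _).symm.toLinearMap

theorem cotangentMap_toCotangent (hD : Set.MapsTo D I I) (x : I) :
    D.cotangentMap hD (I.toCotangent x) = I.toCotangent (D.restrictIdeal hD x) := rfl

theorem exists_iterate_mem_pow_two_of_isNilpotent (hD : Set.MapsTo D I I)
    (h : IsNilpotent (D.cotangentMap hD)) : ∃ n : ℕ, ∀ x ∈ I, D^[n] x ∈ I ^ 2 := by
  obtain ⟨n, hn⟩ := h
  refine ⟨n, fun x hx => ?_⟩
  have hval : Function.Semiconj Subtype.val (D.restrictIdeal hD) D := fun _ => rfl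
  have hcot : Function.Semiconj I.toCotangent (D.restrictIdeal hD) (D.cotangentMap hD) :=
    D.cotangentMap_toCotangent hD
  rw [← hval.iterate_right n ⟨x, hx⟩, ← I.toCotangent_eq_zero, hcot.iterate_right n,
    ← Module.End.coe_pow, hn, LinearMap.zero_apply]

theorem exists_sub_smul_mem_of_hasEigenvalue (hD : Set.MapsTo D I I) {μ : R}
    (h : (D.cotangentMap hD).HasEigenvalue μ) : ∃ v ∈ I, v ∉ I ^ 2 ∧ D v - μ • v ∈ I ^ 2 := by
  obtain ⟨w, hw⟩ := h.exists_hasEigenvector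
  obtain ⟨x, rfl⟩ := I.toCotangent_surjective w
  refine ⟨x, x.2, fun hx => hw.2 ((I.toCotangent_eq_zero x).mpr hx), ?_⟩
  have := hw.apply_eq_smul
  rwa [cotangentMap_toCotangent, ← LinearMap.map_smul_of_tower, I.toCotangent_eq] at this

theorem map_pow_of_sub_smul_mem {r : ℕ} (hI : I ^ (r + 1) = ⊥) {v : A} (hv : v ∈ I) {μ : R}
    (h : D v - μ • v ∈ I ^ 2) : D (v ^ r) = (r * μ) • v ^ r := by
  cases r with
  | zero => simp
  | succ n =>
    have hw : v ^ n * (D v - μ • v) = 0 := by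
      have := Ideal.mul_mem_mul (Ideal.pow_mem_pow hv n) h
      rwa [← pow_add, hI, Ideal.mem_bot] at this
    rw [Algebra.smul_def] at hw
    rw [D.leibniz_pow, Nat.add_sub_cancel, smul_eq_mul, nsmul_eq_mul, Algebra.smul_def, map_mul,
      _root_.map_natCast]
    linear_combination (↑(n + 1) : A) * hw

end Derivation

theorem Derivation.eq_zero_of_sub_smul_mem {K A : Type*} [Field K] [CharZero K] [CommRing A]
    [Algebra K A] (D : Derivation K A A) {I : Ideal A} {r : ℕ} (hI : I ^ (r + 1) = ⊥) {v : A}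
    (hv : v ∈ I) (hv2 : v ∉ I ^ 2) (hDv : D (v ^ r) = 0) (hvr : v ^ r ≠ 0) {μ : K}
    (h : D v - μ • v ∈ I ^ 2) : μ = 0 := by
  have hr : r ≠ 0 := by
    rintro rfl
    rw [zero_add, pow_one] at hI
    exact hv2 ((Submodule.mem_bot A).mp (hI ▸ hv) ▸ zero_mem _)
  rw [D.map_pow_of_sub_smul_mem hI hv h, smul_eq_zero] at hDv
  simpa [hr, hvr] using hDv

theorem induced_map_nilpotent_of_full_null_index_general
    (A : Type) [CommRing A] [Algebra ℂ A] [FiniteDimensional ℂ A] [IsLocalRing A]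
    (r : ℕ)
    (hr' : IsLocalRing.maximalIdeal A ^ (r + 1) = ⊥)
    (s : A) (hs : s ≠ 0)
    (P : A → ℂ) (hP : ∀ m ∈ IsLocalRing.maximalIdeal A, m ^ r = P m • s)
    -- `A` is of full null-index:
    (hfni : ∀ ξ : Derivation ℂ A A, ξ ≠ 0 → ∀ lam : ℂ,
      (∃ v, v ∈ IsLocalRing.maximalIdeal A ∧ v ∉ IsLocalRing.maximalIdeal A ^ 2 ∧
        ξ v - lam • v ∈ IsLocalRing.maximalIdeal A ^ 2) →
      ∃ v, v ∈ IsLocalRing.maximalIdeal A ∧ v ∉ IsLocalRing.maximalIdeal A ^ 2 ∧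
        ξ v - lam • v ∈ IsLocalRing.maximalIdeal A ^ 2 ∧ P v ≠ 0)
    (k : LieSubalgebra ℂ (Derivation ℂ A A))
    (hk : ∀ ξ ∈ k, ξ s = 0) :
    ∀ ξ ∈ k, ∃ n : ℕ,
      ∀ v ∈ IsLocalRing.maximalIdeal A, (⇑ξ)^[n] v ∈ IsLocalRing.maximalIdeal A ^ 2 := by
  intro ξ hξ
  by_cases hξ0 : ξ = 0
  · exact ⟨1, fun v _ => by simp [hξ0]⟩
  have hm : Set.MapsTo ξ (maximalIdeal A) (maximalIdeal A) := fun x hx =>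
    ξ.map_mem_maximalIdeal_of_isNilpotent
      ⟨r + 1, by simpa [hr'] using Ideal.pow_mem_pow hx (r + 1)⟩
  refine ξ.exists_iterate_mem_pow_two_of_isNilpotent hm
    (Module.End.isNilpotent_of_forall_hasEigenvalue_eq_zero _ fun μ hμ => ?_)
  obtain ⟨v, hv, hv2, hvμ, hPv⟩ := hfni ξ hξ0 μ (ξ.exists_sub_smul_mem_of_hasEigenvalue hm hμ)
  refine ξ.eq_zero_of_sub_smul_mem hr' hv hv2 ?_ ?_ hvμ
  · rw [hP v hv, ξ.map_smul, hk ξ hξ, smul_zero]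
  · rw [hP v hv]
    exact smul_ne_zero hPv hs

/-- Let `A` be a finite-dimensional Gorenstein local ℂ-algebra of full
null-index and `k` a Lie subalgebra of `Der(A)` acting trivially on the socle.
Then for every `ξ ∈ k` the induced linear map `ρ(ξ)` on `V = m/m²` is
nilpotent: some iterate of `ξ` maps the maximal ideal into `m²`. -/
theorem induced_map_nilpotent_of_full_null_index
    (A : Type) [CommRing A] [Algebra ℂ A] [FiniteDimensional ℂ A] [IsLocalRing A]
    (r : ℕ) (hr : IsLocalRing.maximalIdeal A ^ r ≠ ⊥)
    (hr' : IsLocalRing.maximalIdeal A ^ (r + 1) = ⊥)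
    (s : A) (hs : s ≠ 0)
    (hsoc : ∀ a : A,
      (a ∈ IsLocalRing.maximalIdeal A ∧ ∀ x ∈ IsLocalRing.maximalIdeal A, a * x = 0) ↔
        a ∈ Submodule.span ℂ {s})
    (P : A → ℂ) (hP : ∀ m ∈ IsLocalRing.maximalIdeal A, m ^ r = P m • s)
    -- `A` is of full null-index:
    (hfni : ∀ ξ : Derivation ℂ A A, ξ ≠ 0 → ∀ lam : ℂ,
      (∃ v, v ∈ IsLocalRing.maximalIdeal A ∧ v ∉ IsLocalRing.maximalIdeal A ^ 2 ∧
        ξ v - lam • v ∈ IsLocalRing.maximalIdeal A ^ 2) →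
      ∃ v, v ∈ IsLocalRing.maximalIdeal A ∧ v ∉ IsLocalRing.maximalIdeal A ^ 2 ∧
        ξ v - lam • v ∈ IsLocalRing.maximalIdeal A ^ 2 ∧ P v ≠ 0)
    (k : LieSubalgebra ℂ (Derivation ℂ A A))
    (hk : ∀ ξ ∈ k, ξ s = 0) :
    ∀ ξ ∈ k, ∃ n : ℕ,
      ∀ v ∈ IsLocalRing.maximalIdeal A, (⇑ξ)^[n] v ∈ IsLocalRing.maximalIdeal A ^ 2 :=
  induced_map_nilpotent_of_full_null_index_general A r hr' s hs P hP hfni k hk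
end

section
/- Let A be a finite-dimensional local ℂ-algebra with maximal ideal m of nilpotency index r. Let D be the Lie subalgebra of Der(A) consisting of derivations ξ with ξ(m) ⊆ m². Then D is a solvable Lie algebra; more precisely, the i-th derived subalgebra D^(i) maps m into m^{i+2}, so D^(r-1) = 0. -/
/-!
Let `F n` be the space of derivations mapping `m` into `m ^ (n + 1)`. The Leibniz rule shows
that such a derivation maps `m ^ (k + 1)` into `m ^ (k + n + 1)`, hence `⁅F a, F b⁆ ⊆ F (a + b)`.
As `D = F 1`, induction gives `D^(i) ⊆ F (2 ^ i) ⊆ F (i + 1)`. Since `ℂ` is algebraically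
closed and `A` is finite-dimensional, `A = ℂ ⊕ m`, so a derivation is determined by its values
on `m`; those of an element of `D^(r-1)` lie in `m ^ (r + 1) = 0`.
-/

open IsLocalRing

namespace Derivation

section Filtration

variable {R A : Type*} [CommRing A] (I : Ideal A)

theorem apply_mem_pow_add [CommSemiring R] [Algebra R A] {D : Derivation R A A} {s : ℕ}
    (hD : ∀ x ∈ I, D x ∈ I ^ s) (k : ℕ) : ∀ x ∈ I ^ (k + 1), D x ∈ I ^ (k + s) := by
  induction k with
  | zero => simpa using hD
  | succ k ih =>
    intro x hx
    rw [pow_succ] at hx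
    refine Submodule.mul_induction_on hx (fun a ha b hb => ?_)
      (fun _ _ => by rw [map_add]; exact add_mem)
    rw [leibniz, smul_eq_mul, smul_eq_mul]
    refine add_mem ?_ ?_
    · rw [pow_add]
      exact Ideal.mul_mem_mul ha (hD b hb)
    · rw [show k + 1 + s = k + s + 1 by omega, pow_succ, mul_comm b]
      exact Ideal.mul_mem_mul (ih a ha) hb

variable [CommRing R] [Algebra R A]

/-- Derivations raising the `I`-adic order by at least `n`. -/
def filtration (n : ℕ) : Submodule R (Derivation R A A) where
  carrier := {D | ∀ x ∈ I, D x ∈ I ^ (n + 1)}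
  add_mem' hD₁ hD₂ x hx := add_mem (hD₁ x hx) (hD₂ x hx)
  zero_mem' _ _ := zero_mem _
  smul_mem' c _ hD x hx := Submodule.smul_of_tower_mem _ c (hD x hx)

theorem filtration_antitone : Antitone (filtration (R := R) I) :=
  fun _ _ hmn _ hD x hx => Ideal.pow_le_pow_right (by omega) (hD x hx)

theorem lie_mem_filtration {a b : ℕ} {D₁ D₂ : Derivation R A A} (h₁ : D₁ ∈ filtration I a)
    (h₂ : D₂ ∈ filtration I b) : ⁅D₁, D₂⁆ ∈ filtration I (a + b) := by
  intro x hx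
  rw [commutator_apply]
  refine sub_mem ?_ ?_
  · simpa [add_comm b, add_assoc] using apply_mem_pow_add I h₁ b _ (h₂ x hx)
  · simpa [add_assoc] using apply_mem_pow_add I h₂ a _ (h₁ x hx)

end Filtration

theorem eq_zero_of_forall_mem_maximalIdeal {K A : Type*} [CommRing K] [CommRing A] [IsLocalRing A]
    [Algebra K A]
    (hK : Function.Surjective (algebraMap K (ResidueField A))) {D : Derivation K A A}
    (hD : ∀ x ∈ maximalIdeal A, D x = 0) : D = 0 := by
  ext a
  obtain ⟨c, hc⟩ := hK (residue A a)
  have hmem : a - algebraMap K A c ∈ maximalIdeal A := by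
    rw [← residue_eq_zero_iff, map_sub, ← hc]
    exact sub_self _
  calc D a = D (a - algebraMap K A c) := by rw [map_sub, D.map_algebraMap, sub_zero]
    _ = 0 := hD _ hmem

end Derivation

theorem LieAlgebra.mem_of_mem_derivedSeries {R L : Type*} [CommRing R] [LieRing L]
    [LieAlgebra R L]
    (F : ℕ → Submodule R L) (h₀ : ∀ x, x ∈ F 0)
    (hlie : ∀ i, ∀ x ∈ F i, ∀ y ∈ F i, ⁅x, y⁆ ∈ F (i + 1)) (i : ℕ) :
    ∀ x ∈ derivedSeries R L i, x ∈ F i := by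
  induction i with
  | zero => exact fun x _ => h₀ x
  | succ i ih =>
    intro x hx
    rw [derivedSeries_def, derivedSeriesOfIdeal_succ, ← derivedSeries_def,
      ← LieSubmodule.mem_toSubmodule, LieSubmodule.lieIdeal_oper_eq_linear_span'] at hx
    refine Submodule.span_le.2 ?_ hx
    rintro _ ⟨x, hx, y, hy, rfl⟩
    exact hlie i x (ih x hx) y (ih y hy)

theorem kernel_subalgebra_solvable_general
    (A : Type) [CommRing A] [Algebra ℂ A] [FiniteDimensional ℂ A] [IsLocalRing A]
    (r : ℕ)
    (hr' : IsLocalRing.maximalIdeal A ^ (r + 1) = ⊥)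
    (D : LieSubalgebra ℂ (Derivation ℂ A A))
    (hD : ∀ ξ : Derivation ℂ A A, ξ ∈ D ↔
      ∀ m ∈ IsLocalRing.maximalIdeal A, ξ m ∈ IsLocalRing.maximalIdeal A ^ 2) :
    (∀ (i : ℕ) (ξ : D), ξ ∈ LieAlgebra.derivedSeries ℂ D i →
      ∀ m ∈ IsLocalRing.maximalIdeal A,
        (ξ : Derivation ℂ A A) m ∈ IsLocalRing.maximalIdeal A ^ (i + 2)) ∧
    LieAlgebra.derivedSeries ℂ D (r - 1) = ⊥ ∧
    LieAlgebra.IsSolvable D := by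
  let F (i : ℕ) : Submodule ℂ D :=
    (Derivation.filtration (maximalIdeal A) (i + 1)).comap (D.incl : D →ₗ[ℂ] Derivation ℂ A A)
  have hF : ∀ i, ∀ ξ ∈ LieAlgebra.derivedSeries ℂ D i, ξ ∈ F i := by
    refine LieAlgebra.mem_of_mem_derivedSeries F (fun ξ => (hD ξ).1 ξ.2) fun i x hx y hy => ?_
    exact Derivation.filtration_antitone _ (by omega) (Derivation.lie_mem_filtration _ hx hy)
  have hbot : LieAlgebra.derivedSeries ℂ D (r - 1) = ⊥ := by
    refine (LieSubmodule.eq_bot_iff _).2 fun ξ hξ => Subtype.ext ?_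
    refine Derivation.eq_zero_of_forall_mem_maximalIdeal
      IsAlgClosed.algebraMap_bijective_of_isIntegral.2 fun x hx => ?_
    have := Ideal.pow_le_pow_right (by omega : r + 1 ≤ r - 1 + 2) (hF _ ξ hξ x hx)
    rwa [hr', Ideal.mem_bot] at this
  exact ⟨hF, hbot, .mk hbot⟩

/-- Let `A` be a finite-dimensional local ℂ-algebra with `m^(r+1) = 0`, and let
`D` be the Lie subalgebra of `Der(A)` of derivations mapping `m` into `m²`.
Then the `i`-th derived subalgebra of `D` maps `m` into `m^(i+2)`; in
particular `D` is solvable. -/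
theorem kernel_subalgebra_solvable
    (A : Type) [CommRing A] [Algebra ℂ A] [FiniteDimensional ℂ A] [IsLocalRing A]
    (r : ℕ) (hr : IsLocalRing.maximalIdeal A ^ r ≠ ⊥)
    (hr' : IsLocalRing.maximalIdeal A ^ (r + 1) = ⊥)
    (D : LieSubalgebra ℂ (Derivation ℂ A A))
    (hD : ∀ ξ : Derivation ℂ A A, ξ ∈ D ↔
      ∀ m ∈ IsLocalRing.maximalIdeal A, ξ m ∈ IsLocalRing.maximalIdeal A ^ 2) :
    (∀ (i : ℕ) (ξ : D), ξ ∈ LieAlgebra.derivedSeries ℂ D i →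
      ∀ m ∈ IsLocalRing.maximalIdeal A,
        (ξ : Derivation ℂ A A) m ∈ IsLocalRing.maximalIdeal A ^ (i + 2)) ∧
    LieAlgebra.derivedSeries ℂ D (r - 1) = ⊥ ∧
    LieAlgebra.IsSolvable D :=
  kernel_subalgebra_solvable_general A r hr' D hD
end

section
/- Let A be a finite-dimensional Gorenstein local ℂ-algebra of full null-index, and let k ⊆ Der(A) be a Lie subalgebra acting trivially on Soc(A). Then k is a solvable Lie algebra. -/
/-!
Let `ξ ∈ k` and let `v ∈ m \ m²` be an eigenvector of `ξ` modulo `m²`, with eigenvalue `μ`, such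
that `P v ≠ 0`. Since `v ^ (r - 1) m² ⊆ m ^ (r + 1) = 0`, the Leibniz rule gives
`ξ (v ^ r) = r μ v ^ r = r μ P(v) s`, whereas `ξ (v ^ r) = P(v) ξ s = 0`; hence `μ = 0`.
Full null-index thus makes `ξ` nilpotent on `m / m²`, the Leibniz rule propagates this to every
`m ^ j / m ^ (j + 1)`, and so `ξ` is nilpotent on `A`. The Lie algebra `k` therefore acts
faithfully on `A` by nilpotent endomorphisms, so it is nilpotent by Engel's theorem.
-/

open IsLocalRing

namespace Module.End

variable {K V : Type*} [Field K] [IsAlgClosed K] [AddCommGroup V] [Module K V]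
  [FiniteDimensional K V]

theorem isNilpotent_of_forall_hasEigenvalue_eq_zero_s15 (f : End K V)
    (h : ∀ μ, f.HasEigenvalue μ → μ = 0) : IsNilpotent f := by
  have htop : f.maxGenEigenspace 0 = ⊤ := by
    rw [eq_top_iff, ← iSup_maxGenEigenspace_eq_top f, iSup_le_iff]
    intro μ
    rcases eq_or_ne μ 0 with rfl | hμ
    · rfl
    · have : ¬ f.HasUnifEigenvalue μ ⊤ := fun hμ' =>
        hμ (h μ ((hasUnifEigenvalue_iff_hasUnifEigenvalue_one (by simp)).mp hμ'))
      simp_all [HasUnifEigenvalue]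
  refine ((LinearMap.charpoly_nilpotent_tfae f).out 0 2).mpr fun v => ?_
  simpa using (f.mem_maxGenEigenspace 0 v).mp (htop ▸ Submodule.mem_top)

theorem exists_pow_apply_mem_of_forall_eigenvalue_mod_eq_zero (f : End K V) {W : Submodule K V}
    (hW : W ≤ W.comap f) (h : ∀ (μ : K) (v : V), v ∉ W → f v - μ • v ∈ W → μ = 0) :
    ∃ n : ℕ, ∀ v, (f ^ n) v ∈ W := by
  obtain ⟨n, hn⟩ := isNilpotent_of_forall_hasEigenvalue_eq_zero_s15 (W.mapQ W f hW) fun μ hμ => by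
    obtain ⟨x, hx⟩ := hμ.exists_hasEigenvector
    obtain ⟨v, rfl⟩ := W.mkQ_surjective x
    refine h μ v (fun hv => hx.2 ((Submodule.Quotient.mk_eq_zero W).mpr hv)) ?_
    have hfv := hx.apply_eq_smul
    rw [Submodule.mkQ_apply, Submodule.mapQ_apply] at hfv
    rw [← Submodule.Quotient.mk_eq_zero, Submodule.Quotient.mk_sub, Submodule.Quotient.mk_smul,
      hfv, sub_self]
  refine ⟨n, fun v => ?_⟩
  have hfnv := LinearMap.congr_fun (W.mapQ_pow hW n) (W.mkQ v)
  rwa [hn, LinearMap.zero_apply, Submodule.mkQ_apply, Submodule.mapQ_apply,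
    Submodule.Quotient.mk_eq_zero] at hfnv

end Module.End

theorem IsLocalRing.exists_sub_algebraMap_mem_maximalIdeal {K A : Type*} [Field K] [IsAlgClosed K]
    [CommRing A] [Algebra K A] [IsLocalRing A] [Algebra.IsIntegral K A] (a : A) :
    ∃ c : K, a - algebraMap K A c ∈ maximalIdeal A := by
  have : Algebra.IsIntegral K (ResidueField A) :=
    .of_surjective (IsScalarTower.toAlgHom K A (ResidueField A)) residue_surjective
  obtain ⟨c, hc⟩ := (IsAlgClosed.algebraMap_bijective_of_isIntegral (k := K)
    (K := ResidueField A)).2 (residue A a)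
  refine ⟨c, ?_⟩
  rw [← residue_eq_zero_iff, map_sub, ← hc, sub_eq_zero]
  rfl

namespace Derivation

section LocalRing

variable {K A : Type*} [Field K] [CharZero K] [CommRing A] [Algebra K A] [IsLocalRing A]
  (D : Derivation K A A)

theorem apply_mem_maximalIdeal_of_isNilpotent {b : A} (hb : IsNilpotent b) :
    D b ∈ maximalIdeal A := by
  by_contra hDb
  have hunit : IsUnit (D b) := by simpa [mem_maximalIdeal, mem_nonunits_iff] using hDb
  -- `D (b ^ (n + 2)) = (n + 2) b ^ (n + 1) D b`, where `n + 2` and `D b` are units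
  have hdesc : ∀ n : ℕ, b ^ (n + 1) = 0 → b = 0 := by
    intro n
    induction n with
    | zero => simp
    | succ n ih =>
      intro hn
      apply ih
      have h0 : ((n + 2 : ℕ) : A) * D b * b ^ (n + 1) = 0 := by
        have hDbn := congrArg D hn
        rw [leibniz_pow, map_zero, Nat.add_sub_cancel] at hDbn
        rw [← hDbn, nsmul_eq_mul, smul_eq_mul]
        ring
      have hn2 : IsUnit ((n + 2 : ℕ) : A) := by
        rw [← _root_.map_natCast (algebraMap K A)]
        exact (isUnit_iff_ne_zero.mpr (Nat.cast_ne_zero.mpr (by omega))).map _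
      exact (hn2.mul hunit).mul_right_eq_zero.mp h0
  obtain ⟨n, hn⟩ := hb
  cases n with
  | zero => simp at hn
  | succ n => simp [hdesc n hn] at hDb

theorem apply_mem_maximalIdeal [IsAlgClosed K] [Algebra.IsIntegral K A]
    (hm : IsNilpotent (maximalIdeal A)) (a : A) : D a ∈ maximalIdeal A := by
  obtain ⟨c, hc⟩ := exists_sub_algebraMap_mem_maximalIdeal (K := K) a
  obtain ⟨n, hn⟩ := hm
  have hDac := D.apply_mem_maximalIdeal_of_isNilpotent
    ⟨n, by simpa [hn] using Ideal.pow_mem_pow hc n⟩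
  rwa [map_sub, map_algebraMap, sub_zero] at hDac

end LocalRing

section Filtration

variable {R A : Type*} [CommRing R] [CommRing A] [Algebra R A] (D : Derivation R A A)
  {I : Ideal A}

theorem apply_mem_pow (hI : ∀ x ∈ I, D x ∈ I) (n : ℕ) {x : A} (hx : x ∈ I ^ n) :
    D x ∈ I ^ n := by
  induction n generalizing x with
  | zero => simp
  | succ n ih =>
    rw [pow_succ] at hx ⊢
    refine Submodule.mul_induction_on hx (fun a ha b hb => ?_) (fun x y hx hy => ?_)
    · rw [leibniz, smul_eq_mul, smul_eq_mul, mul_comm b]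
      exact add_mem (Ideal.mul_mem_mul ha (hI b hb)) (Ideal.mul_mem_mul (ih ha) hb)
    · rw [map_add]
      exact add_mem hx hy

theorem iterate_apply_mem_pow (hI : ∀ x ∈ I, D x ∈ I) (n k : ℕ) {x : A} (hx : x ∈ I ^ n) :
    D^[k] x ∈ I ^ n :=
  Set.MapsTo.iterate (f := D) (s := (I ^ n : Ideal A)) (fun _ => D.apply_mem_pow hI n) k hx

theorem iterate_apply_mul_mem_pow (hI : ∀ x ∈ I, D x ∈ I) {p q i j : ℕ} {a b : A}
    (ha : a ∈ I ^ p) (hb : b ∈ I ^ q) (hai : D^[i] a ∈ I ^ (p + 1))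
    (hbj : D^[j] b ∈ I ^ (q + 1)) : D^[i + j] (a * b) ∈ I ^ (p + q + 1) := by
  obtain ⟨n, hn⟩ : ∃ n, i + j = n := ⟨_, rfl⟩
  rw [hn]
  induction n generalizing i j a b with
  | zero =>
    obtain ⟨rfl, rfl⟩ : i = 0 ∧ j = 0 := by omega
    simpa [← pow_add, add_right_comm p 1 q] using Ideal.mul_mem_mul hai hb
  | succ n ih =>
    rcases i with _ | i
    · refine D.iterate_apply_mem_pow hI _ _ ?_
      simpa [← pow_add, add_right_comm p 1 q] using Ideal.mul_mem_mul hai hb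
    rcases j with _ | j
    · refine D.iterate_apply_mem_pow hI _ _ ?_
      simpa [← pow_add, add_assoc] using Ideal.mul_mem_mul ha hbj
    rw [Function.iterate_succ_apply, leibniz, smul_eq_mul, smul_eq_mul, mul_comm b,
      iterate_map_add]
    exact add_mem (ih ha (D.apply_mem_pow hI q hb) hai hbj (by omega))
      (ih (i := i) (D.apply_mem_pow hI p ha) hb hai hbj (by omega))

theorem exists_iterate_apply_mem_pow_succ_succ (hI : ∀ x ∈ I, D x ∈ I)
    (hsq : ∃ n, ∀ x ∈ I, D^[n] x ∈ I ^ 2) (p : ℕ) :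
    ∃ K, ∀ x ∈ I ^ (p + 1), D^[K] x ∈ I ^ (p + 2) := by
  obtain ⟨n, hn⟩ := hsq
  induction p with
  | zero => exact ⟨n, fun x hx => hn x (by simpa using hx)⟩
  | succ p ih =>
    obtain ⟨K, hK⟩ := ih
    refine ⟨K + n, fun x hx => ?_⟩
    rw [pow_succ] at hx
    refine Submodule.mul_induction_on hx (fun a ha b hb => ?_) (fun x y hx hy => ?_)
    · exact D.iterate_apply_mul_mem_pow hI (q := 1) ha (by simpa using hb) (hK a ha)
        (hn b (by simpa using hb))
    · rw [iterate_map_add]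
      exact add_mem hx hy

theorem exists_iterate_apply_mem_pow (hI : ∀ x ∈ I, D x ∈ I)
    (hsq : ∃ n, ∀ x ∈ I, D^[n] x ∈ I ^ 2) (p : ℕ) :
    ∃ K, ∀ x ∈ I, D^[K] x ∈ I ^ (p + 1) := by
  induction p with
  | zero => exact ⟨0, fun x hx => by simpa using hx⟩
  | succ p ih =>
    obtain ⟨K, hK⟩ := ih
    obtain ⟨L, hL⟩ := D.exists_iterate_apply_mem_pow_succ_succ hI hsq p
    exact ⟨L + K, fun x hx => by rw [Function.iterate_add_apply]; exact hL _ (hK x hx)⟩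

theorem isNilpotent_of_iterate_apply_mem_sq (hD : ∀ x, D x ∈ I) (hIn : IsNilpotent I)
    (hsq : ∃ n, ∀ x ∈ I, D^[n] x ∈ I ^ 2) : IsNilpotent (D : Module.End R A) := by
  obtain ⟨p, hp⟩ := hIn
  obtain ⟨K, hK⟩ := D.exists_iterate_apply_mem_pow (fun x _ => hD x) hsq p
  refine ⟨K + 1, LinearMap.ext fun x => ?_⟩
  have hDx := hK (D x) (hD x)
  rw [pow_succ, hp, Ideal.zero_eq_bot, Ideal.bot_mul, Ideal.mem_bot] at hDx
  rwa [Module.End.pow_apply, Function.iterate_succ_apply]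

theorem apply_pow_eq_smul_of_sub_smul_mem_sq {r : ℕ} (hr : I ^ (r + 1) = ⊥) {w : A} (hw : w ∈ I)
    {μ : R} (hμ : D w - μ • w ∈ I ^ 2) : D (w ^ r) = (r * μ) • w ^ r := by
  rcases r with _ | r
  · simp
  obtain ⟨z, hz, hDw⟩ : ∃ z ∈ I ^ 2, D w = μ • w + z := ⟨_, hμ, by abel⟩
  have hwz : w ^ r * z = 0 := by
    have := Ideal.mul_mem_mul (Ideal.pow_mem_pow hw r) hz
    rwa [← pow_add, hr, Ideal.mem_bot] at this
  rw [leibniz_pow, hDw, Nat.add_sub_cancel, smul_eq_mul, mul_add, hwz, add_zero, mul_smul_comm,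
    ← pow_succ, ← Nat.cast_smul_eq_nsmul R, smul_smul]

end Filtration

theorem eq_zero_of_apply_sub_smul_mem_sq {K A : Type*} [Field K] [CharZero K] [CommRing A]
    [Algebra K A] (D : Derivation K A A) {I : Ideal A} {r : ℕ} (hr : I ^ (r + 1) = ⊥) {s : A}
    (hs : s ≠ 0) (hDs : D s = 0) {P : A → K} (hP : ∀ x ∈ I, x ^ r = P x • s) {w : A}
    (hw : w ∈ I) (hw2 : w ∉ I ^ 2) (hPw : P w ≠ 0) {μ : K} (hμ : D w - μ • w ∈ I ^ 2) :
    μ = 0 := by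
  have hr0 : r ≠ 0 := by
    rintro rfl
    rw [zero_add, pow_one] at hr
    exact hw2 (by simp [(Ideal.mem_bot.mp (hr ▸ hw))])
  have hrμPs : ((r * μ) * P w) • s = 0 := by
    rw [mul_smul, ← hP w hw, ← D.apply_pow_eq_smul_of_sub_smul_mem_sq hr hw hμ, hP w hw,
      map_smul, hDs, smul_zero]
  simpa [hs, hPw, hr0] using hrμPs

end Derivation

/-- An eigenvector of the map induced by `ξ` on `m / m²` is encoded by a representative
`v ∈ m \ m²` with `ξ v - μ • v ∈ m²`. -/
def HasFullNullIndex (K A : Type*) [Field K] [CommRing A] [Algebra K A] [IsLocalRing A]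
    (P : A → K) : Prop :=
  ∀ ξ : Derivation K A A, ξ ≠ 0 → ∀ μ : K,
    (∃ v ∈ maximalIdeal A, v ∉ maximalIdeal A ^ 2 ∧ ξ v - μ • v ∈ maximalIdeal A ^ 2) →
    ∃ v ∈ maximalIdeal A, v ∉ maximalIdeal A ^ 2 ∧ ξ v - μ • v ∈ maximalIdeal A ^ 2 ∧ P v ≠ 0

theorem HasFullNullIndex.isNilpotent_derivation {K A : Type*} [Field K] [IsAlgClosed K]
    [CharZero K] [CommRing A] [Algebra K A] [FiniteDimensional K A] [IsLocalRing A] {P : A → K}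
    (hfni : HasFullNullIndex K A P) {r : ℕ} (hr : maximalIdeal A ^ (r + 1) = ⊥) {s : A}
    (hs : s ≠ 0) (hP : ∀ x ∈ maximalIdeal A, x ^ r = P x • s) (D : Derivation K A A)
    (hDs : D s = 0) : IsNilpotent (D : Module.End K A) := by
  rcases eq_or_ne D 0 with rfl | hD0
  · exact ⟨1, by ext; simp⟩
  have hDm : ∀ a, D a ∈ maximalIdeal A := D.apply_mem_maximalIdeal ⟨r + 1, hr⟩
  have hsq_inv : (maximalIdeal A ^ 2).restrictScalars K ≤
      ((maximalIdeal A ^ 2).restrictScalars K).comap (D : Module.End K A) :=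
    fun x hx => D.apply_mem_pow (fun y _ => hDm y) 2 hx
  obtain ⟨n, hn⟩ := Module.End.exists_pow_apply_mem_of_forall_eigenvalue_mod_eq_zero _
    hsq_inv fun μ v hv hμ => by
      by_contra hμ0
      -- `D` maps `A` into `m`, so an eigenvector modulo `m²` with `μ ≠ 0` lies in `m`
      have hvm : v ∈ maximalIdeal A := by
        have hμv : μ • v ∈ maximalIdeal A :=
          sub_sub_cancel (D v) (μ • v) ▸ sub_mem (hDm v) (Ideal.pow_le_self two_ne_zero hμ)
        simpa [smul_smul, hμ0] using Submodule.smul_of_tower_mem _ μ⁻¹ hμv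
      obtain ⟨w, hw, hw2, hwμ, hPw⟩ := hfni D hD0 μ ⟨v, hvm, hv, hμ⟩
      exact hμ0 (D.eq_zero_of_apply_sub_smul_mem_sq hr hs hDs hP hw hw2 hPw hwμ)
  exact D.isNilpotent_of_iterate_apply_mem_sq hDm ⟨r + 1, hr⟩
    ⟨n, fun x _ => by simpa [Module.End.pow_apply] using hn x⟩

instance Derivation.instIsFaithful {R A : Type*} [CommRing R] [CommRing A] [Algebra R A] :
    LieModule.IsFaithful R (Derivation R A A) A :=
  ⟨fun _ _ h => Derivation.ext fun a => LinearMap.congr_fun h a⟩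

section

attribute [local instance 100] LieRing.ofAssociativeRing

theorem LieAlgebra.isNilpotent_of_isFaithful {K L M : Type*} [Field K] [LieRing L]
    [LieAlgebra K L] [AddCommGroup M] [Module K M] [LieRingModule L M] [LieModule K L M]
    [FiniteDimensional K M] [LieModule.IsFaithful K L M]
    (h : ∀ x : L, IsNilpotent (LieModule.toEnd K L M x)) : LieRing.IsNilpotent L := by
  have : LieRing.IsNilpotent (LieModule.toEnd K L M).range := by
    rw [LieAlgebra.isNilpotent_iff_forall (R := K)]
    rintro ⟨_, x, rfl⟩
    exact LieAlgebra.isNilpotent_ad_of_isNilpotent (h x)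
  exact Function.Injective.lieAlgebra_isNilpotent (f := (LieModule.toEnd K L M).rangeRestrict)
    fun x y hxy => LieModule.IsFaithful.injective_toEnd (congrArg Subtype.val hxy)

end

theorem subalgebra_killing_socle_solvable_general
    (A : Type) [CommRing A] [Algebra ℂ A] [FiniteDimensional ℂ A] [IsLocalRing A]
    (r : ℕ)
    (hr' : IsLocalRing.maximalIdeal A ^ (r + 1) = ⊥)
    (s : A) (hs : s ≠ 0)
    (P : A → ℂ) (hP : ∀ m ∈ IsLocalRing.maximalIdeal A, m ^ r = P m • s)
    -- `A` is of full null-index: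
    (hfni : ∀ ξ : Derivation ℂ A A, ξ ≠ 0 → ∀ lam : ℂ,
      (∃ v, v ∈ IsLocalRing.maximalIdeal A ∧ v ∉ IsLocalRing.maximalIdeal A ^ 2 ∧
        ξ v - lam • v ∈ IsLocalRing.maximalIdeal A ^ 2) →
      ∃ v, v ∈ IsLocalRing.maximalIdeal A ∧ v ∉ IsLocalRing.maximalIdeal A ^ 2 ∧
        ξ v - lam • v ∈ IsLocalRing.maximalIdeal A ^ 2 ∧ P v ≠ 0)
    (k : LieSubalgebra ℂ (Derivation ℂ A A))
    (hk : ∀ ξ ∈ k, ξ s = 0) :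
    LieAlgebra.IsSolvable k := by
  have : LieRing.IsNilpotent k := LieAlgebra.isNilpotent_of_isFaithful (K := ℂ) (M := A)
    fun ξ => HasFullNullIndex.isNilpotent_derivation hfni hr' hs hP ξ (hk ξ ξ.2)
  infer_instance

/-- Key lemma: if `A` is a finite-dimensional Gorenstein local ℂ-algebra of full
null-index, then every Lie subalgebra `k ⊆ Der(A)` acting trivially on the
socle is solvable. -/
theorem subalgebra_killing_socle_solvable
    (A : Type) [CommRing A] [Algebra ℂ A] [FiniteDimensional ℂ A] [IsLocalRing A]
    (r : ℕ) (hr : IsLocalRing.maximalIdeal A ^ r ≠ ⊥)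
    (hr' : IsLocalRing.maximalIdeal A ^ (r + 1) = ⊥)
    (s : A) (hs : s ≠ 0)
    (hsoc : ∀ a : A,
      (a ∈ IsLocalRing.maximalIdeal A ∧ ∀ x ∈ IsLocalRing.maximalIdeal A, a * x = 0) ↔
        a ∈ Submodule.span ℂ {s})
    (P : A → ℂ) (hP : ∀ m ∈ IsLocalRing.maximalIdeal A, m ^ r = P m • s)
    -- `A` is of full null-index:
    (hfni : ∀ ξ : Derivation ℂ A A, ξ ≠ 0 → ∀ lam : ℂ,
      (∃ v, v ∈ IsLocalRing.maximalIdeal A ∧ v ∉ IsLocalRing.maximalIdeal A ^ 2 ∧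
        ξ v - lam • v ∈ IsLocalRing.maximalIdeal A ^ 2) →
      ∃ v, v ∈ IsLocalRing.maximalIdeal A ∧ v ∉ IsLocalRing.maximalIdeal A ^ 2 ∧
        ξ v - lam • v ∈ IsLocalRing.maximalIdeal A ^ 2 ∧ P v ≠ 0)
    (k : LieSubalgebra ℂ (Derivation ℂ A A))
    (hk : ∀ ξ ∈ k, ξ s = 0) :
    LieAlgebra.IsSolvable k :=
  subalgebra_killing_socle_solvable_general A r hr' s hs P hP hfni k hk
end
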